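/- arXiv:1312.4406 — 4 statements merged into one kernel-verified Lean document; each statement's English description precedes it below -/
import Mathlib

section
/- Let A ∈ ℝ^{m×n}, C ∈ ℝ^{m×p}, and set B = (I − A A⁺) C and L = A⁺ C (I − B⁺ B). Then the Moore-Penrose inverse of the column-partitioned matrix [A | C] equals the block matrix whose top block is (I + L Lᵀ)^{-1}(A⁺ − A⁺ C B⁺) and whose bottom block is Lᵀ (I + L Lᵀ)^{-1}(A⁺ − A⁺ C B⁺) + B⁺. -/
open Matrix

noncomputable def eucNorm {ι : Type*} [Fintype ι] (v : ι → ℝ) : ℝ :=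
  ‖(WithLp.equiv 2 (ι → ℝ)).symm v‖

/-- The four Penrose equations characterizing the Moore-Penrose inverse. -/
def IsMoorePenrose {ι κ : Type*} [Fintype ι] [Fintype κ]
    (A : Matrix ι κ ℝ) (Ap : Matrix κ ι ℝ) : Prop :=
  A * Ap * A = A ∧ Ap * A * Ap = Ap ∧ (A * Ap)ᵀ = A * Ap ∧ (Ap * A)ᵀ = Ap * A

/-!
With `B = (1 - A A⁺) C` one has `A⁺ B = 0` and `B⁺ A = 0`, so the column spaces of `A` and `B`
are orthogonal and `A A⁺ + B B⁺` is the orthogonal projector onto the column space of `[A | C]`.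
Since moreover `B Lᵀ = 0`, we get `C Lᵀ = A L Lᵀ`, i.e. `A + C Lᵀ = A (I + L Lᵀ)`. This cancels
the factor `(I + L Lᵀ)⁻¹` in `[A | C] X`, where `X` is the claimed inverse, and gives
`[A | C] X = A A⁺ + B B⁺`, from which the first three Penrose equations follow. For the fourth,
`X [A | C]` has blocks `K A⁺A, K L, Lᵀ K, Lᵀ K L + B⁺B`, where `K = (I + L Lᵀ)⁻¹` is symmetric
and commutes with `A⁺A`; hence it is symmetric.
-/

theorem Commute.nonsing_inv_right {n R : Type*} [Fintype n] [DecidableEq n] [CommRing R]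
    {P S : Matrix n n R} (h : Commute P S) : Commute P S⁻¹ := by
  by_cases hS : IsUnit S.det
  · lift S to (Matrix n n R)ˣ using (isUnit_iff_isUnit_det S).2 hS
    rw [← coe_units_inv]
    exact h.units_inv_right
  · rw [nonsing_inv_apply_not_isUnit S hS]
    exact Commute.zero_right P

section Gram

variable {κ μ : Type*} [Fintype κ] [Fintype μ] [DecidableEq κ]

theorem isUnit_det_one_add_mul_transpose (L : Matrix κ μ ℝ) : IsUnit (1 + L * Lᵀ).det := by
  have hLLt : (L * Lᵀ).PosSemidef := by
    simpa only [conjTranspose_eq_transpose_of_trivial] using posSemidef_self_mul_conjTranspose L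
  exact (PosDef.one.add_posSemidef hLLt).det_pos.ne'.isUnit

theorem transpose_inv_one_add_mul_transpose (L : Matrix κ μ ℝ) :
    ((1 + L * Lᵀ)⁻¹)ᵀ = (1 + L * Lᵀ)⁻¹ := by
  rw [transpose_nonsing_inv, transpose_add, transpose_one, transpose_mul, transpose_transpose]

end Gram

namespace IsMoorePenrose

variable {ι κ : Type*} [Fintype ι] [Fintype κ] {A : Matrix ι κ ℝ} {Ap : Matrix κ ι ℝ}

theorem pinv_mul_eq_zero_of_transpose_mul_eq_zero (h : IsMoorePenrose A Ap) {α : Type*}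
    {X : Matrix ι α ℝ} (hX : Aᵀ * X = 0) : Ap * X = 0 :=
  calc Ap * X = Ap * (A * Ap)ᵀ * X := by rw [h.2.2.1, ← Matrix.mul_assoc, h.2.1]
    _ = Ap * Apᵀ * (Aᵀ * X) := by simp only [transpose_mul, Matrix.mul_assoc]
    _ = 0 := by rw [hX, Matrix.mul_zero]

theorem one_sub_mul_pinv_mul_self [DecidableEq ι] (h : IsMoorePenrose A Ap) :
    (1 - A * Ap) * A = 0 := by
  rw [Matrix.sub_mul, Matrix.one_mul, h.1, sub_self]

theorem pinv_mul_one_sub_mul_pinv [DecidableEq ι] (h : IsMoorePenrose A Ap) :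
    Ap * (1 - A * Ap) = 0 := by
  rw [Matrix.mul_sub, Matrix.mul_one, ← Matrix.mul_assoc, h.2.1, sub_self]

theorem self_mul_one_sub_pinv_mul [DecidableEq κ] (h : IsMoorePenrose A Ap) :
    A * (1 - Ap * A) = 0 := by
  rw [Matrix.mul_sub, Matrix.mul_one, ← Matrix.mul_assoc, h.1, sub_self]

theorem transpose_one_sub_mul_pinv [DecidableEq ι] (h : IsMoorePenrose A Ap) :
    (1 - A * Ap)ᵀ = 1 - A * Ap := by
  rw [transpose_sub, transpose_one, h.2.2.1]

theorem transpose_one_sub_pinv_mul [DecidableEq κ] (h : IsMoorePenrose A Ap) :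
    (1 - Ap * A)ᵀ = 1 - Ap * A := by
  rw [transpose_sub, transpose_one, h.2.2.2]

theorem transpose_mul_pinv_mul_self {α : Type*} {L : Matrix κ α ℝ} (h : IsMoorePenrose A Ap)
    (hL : Ap * A * L = L) : Lᵀ * (Ap * A) = Lᵀ := by
  rw [← h.2.2.2, ← transpose_mul, hL]

end IsMoorePenrose

section Partitioned

variable {ι κ μ : Type*}
  {A : Matrix ι κ ℝ} {C : Matrix ι μ ℝ} {Ap : Matrix κ ι ℝ} {B : Matrix ι μ ℝ}
  {Bp : Matrix μ ι ℝ} {L : Matrix κ μ ℝ}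

theorem mul_pinv_mul_add_residual [Fintype ι] [Fintype κ] [DecidableEq ι]
    (hB : B = (1 - A * Ap) * C) :
    A * Ap * C + B = C := by
  rw [hB, Matrix.sub_mul, Matrix.one_mul, add_sub_cancel]

theorem pinv_mul_residual [Fintype ι] [Fintype κ] [DecidableEq ι] (hAp : IsMoorePenrose A Ap)
    (hB : B = (1 - A * Ap) * C) : Ap * B = 0 := by
  rw [hB, ← Matrix.mul_assoc, hAp.pinv_mul_one_sub_mul_pinv, Matrix.zero_mul]

theorem residual_pinv_mul_self [Fintype ι] [Fintype κ] [Fintype μ] [DecidableEq ι]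
    (hAp : IsMoorePenrose A Ap) (hB : B = (1 - A * Ap) * C) (hBp : IsMoorePenrose B Bp) :
    Bp * A = 0 :=
  hBp.pinv_mul_eq_zero_of_transpose_mul_eq_zero <| by
    rw [hB, transpose_mul, hAp.transpose_one_sub_mul_pinv, Matrix.mul_assoc,
      hAp.one_sub_mul_pinv_mul_self, Matrix.mul_zero]

theorem residual_pinv_mul_eq [Fintype ι] [Fintype κ] [Fintype μ] [DecidableEq ι]
    (hAp : IsMoorePenrose A Ap) (hB : B = (1 - A * Ap) * C) (hBp : IsMoorePenrose B Bp) :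
    Bp * C = Bp * B := by
  conv_lhs => rw [← mul_pinv_mul_add_residual hB]
  simp only [Matrix.mul_add, ← Matrix.mul_assoc, residual_pinv_mul_self hAp hB hBp,
    Matrix.zero_mul, zero_add]

theorem residual_mul_transpose [Fintype ι] [Fintype μ] [DecidableEq μ]
    (hBp : IsMoorePenrose B Bp) (hL : L = Ap * C * (1 - Bp * B)) : B * Lᵀ = 0 := by
  rw [hL, transpose_mul, hBp.transpose_one_sub_pinv_mul, ← Matrix.mul_assoc,
    hBp.self_mul_one_sub_pinv_mul, Matrix.zero_mul]

theorem pinv_mul_self_mul_of_eq [Fintype ι] [Fintype κ] [Fintype μ] (hAp : IsMoorePenrose A Ap)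
    {α : Type*} {M : Matrix κ α ℝ} {Y : Matrix μ α ℝ} (hM : M = Ap * C * Y) : Ap * A * M = M := by
  rw [hM]
  simp only [← Matrix.mul_assoc, hAp.2.1]

theorem mul_transpose_eq [Fintype ι] [Fintype κ] [Fintype μ] [DecidableEq ι] [DecidableEq μ]
    (hB : B = (1 - A * Ap) * C) (hBp : IsMoorePenrose B Bp) (hL : L = Ap * C * (1 - Bp * B)) :
    C * Lᵀ = A * (L * Lᵀ) :=
  have hBL := residual_mul_transpose hBp hL
  calc C * Lᵀ = (A * Ap * C + B) * Lᵀ := by rw [mul_pinv_mul_add_residual hB]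
    _ = A * (Ap * C * (1 - Bp * B) * Lᵀ) := by
      simp only [Matrix.add_mul, Matrix.sub_mul, Matrix.mul_sub, Matrix.mul_one,
        Matrix.mul_assoc, hBL, Matrix.mul_zero, add_zero, sub_zero]
    _ = A * (L * Lᵀ) := by rw [← hL]

theorem commute_pinv_mul_self_one_add_mul_transpose [Fintype ι] [Fintype κ] [Fintype μ]
    [DecidableEq κ] (hAp : IsMoorePenrose A Ap) (hL : Ap * A * L = L) :
    Commute (Ap * A) (1 + L * Lᵀ) := by
  rw [Commute, SemiconjBy, Matrix.mul_add, Matrix.add_mul, Matrix.mul_one, Matrix.one_mul,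
    ← Matrix.mul_assoc, hL, Matrix.mul_assoc, hAp.transpose_mul_pinv_mul_self hL]

theorem pinv_sub_mul_self [Fintype ι] [Fintype κ] [Fintype μ] [DecidableEq ι]
    (hAp : IsMoorePenrose A Ap) (hB : B = (1 - A * Ap) * C) (hBp : IsMoorePenrose B Bp) :
    (Ap - Ap * C * Bp) * A = Ap * A := by
  rw [Matrix.sub_mul, Matrix.mul_assoc, residual_pinv_mul_self hAp hB hBp, Matrix.mul_zero,
    sub_zero]

theorem pinv_sub_mul_eq [Fintype ι] [Fintype κ] [Fintype μ] [DecidableEq ι] [DecidableEq μ]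
    (hAp : IsMoorePenrose A Ap) (hB : B = (1 - A * Ap) * C) (hBp : IsMoorePenrose B Bp)
    (hL : L = Ap * C * (1 - Bp * B)) : (Ap - Ap * C * Bp) * C = L := by
  rw [hL, Matrix.sub_mul, Matrix.mul_sub, Matrix.mul_one, Matrix.mul_assoc (Ap * C) Bp C,
    residual_pinv_mul_eq hAp hB hBp]

theorem fromCols_mul_fromRows_eq [Fintype ι] [Fintype κ] [Fintype μ] [DecidableEq ι]
    [DecidableEq κ] [DecidableEq μ] (hB : B = (1 - A * Ap) * C) (hBp : IsMoorePenrose B Bp)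
    (hL : L = Ap * C * (1 - Bp * B)) :
    fromCols A C * fromRows ((1 + L * Lᵀ)⁻¹ * (Ap - Ap * C * Bp))
      (Lᵀ * (1 + L * Lᵀ)⁻¹ * (Ap - Ap * C * Bp) + Bp) = A * Ap + B * Bp := by
  have hGram : A + C * Lᵀ = A * (1 + L * Lᵀ) := by
    rw [Matrix.mul_add, Matrix.mul_one, mul_transpose_eq hB hBp hL]
  calc fromCols A C * fromRows ((1 + L * Lᵀ)⁻¹ * (Ap - Ap * C * Bp))
        (Lᵀ * (1 + L * Lᵀ)⁻¹ * (Ap - Ap * C * Bp) + Bp)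
      = (A + C * Lᵀ) * (1 + L * Lᵀ)⁻¹ * (Ap - Ap * C * Bp) + C * Bp := by
        rw [fromCols_mul_fromRows]
        simp only [Matrix.add_mul, Matrix.mul_add, Matrix.mul_assoc, add_assoc]
    _ = A * (Ap - Ap * C * Bp) + C * Bp := by
        rw [hGram, Matrix.mul_assoc A,
          mul_nonsing_inv _ (isUnit_det_one_add_mul_transpose L), Matrix.mul_one]
    _ = A * Ap + B * Bp := by
        rw [hB]
        simp only [Matrix.mul_sub, Matrix.sub_mul, Matrix.one_mul, Matrix.mul_assoc]
        abel

theorem mul_pinv_add_mul_pinv_mul_fromCols [Fintype ι] [Fintype κ] [Fintype μ] [DecidableEq ι]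
    (hAp : IsMoorePenrose A Ap) (hB : B = (1 - A * Ap) * C) (hBp : IsMoorePenrose B Bp) :
    (A * Ap + B * Bp) * fromCols A C = fromCols A C := by
  rw [mul_fromCols, Matrix.add_mul, Matrix.add_mul, Matrix.mul_assoc B,
    residual_pinv_mul_self hAp hB hBp, Matrix.mul_zero, add_zero, hAp.1, Matrix.mul_assoc B,
    residual_pinv_mul_eq hAp hB hBp, ← Matrix.mul_assoc, hBp.1, mul_pinv_mul_add_residual hB]

theorem fromRows_mul_mul_pinv_add_mul_pinv [Fintype ι] [Fintype κ] [Fintype μ] [DecidableEq ι]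
    (hAp : IsMoorePenrose A Ap) (hB : B = (1 - A * Ap) * C) (hBp : IsMoorePenrose B Bp)
    {α : Type*} (K₁ : Matrix α κ ℝ) (K₂ : Matrix μ κ ℝ) :
    fromRows (K₁ * (Ap - Ap * C * Bp)) (K₂ * (Ap - Ap * C * Bp) + Bp) * (A * Ap + B * Bp) =
      fromRows (K₁ * (Ap - Ap * C * Bp)) (K₂ * (Ap - Ap * C * Bp) + Bp) := by
  have hApP : Ap * (A * Ap + B * Bp) = Ap := by
    rw [Matrix.mul_add, ← Matrix.mul_assoc, hAp.2.1, ← Matrix.mul_assoc, pinv_mul_residual hAp hB,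
      Matrix.zero_mul, add_zero]
  have hBpP : Bp * (A * Ap + B * Bp) = Bp := by
    rw [Matrix.mul_add, ← Matrix.mul_assoc, residual_pinv_mul_self hAp hB hBp, Matrix.zero_mul,
      zero_add, ← Matrix.mul_assoc, hBp.2.1]
  have hDP : (Ap - Ap * C * Bp) * (A * Ap + B * Bp) = Ap - Ap * C * Bp := by
    rw [Matrix.sub_mul, Matrix.mul_assoc (Ap * C), hBpP, hApP]
  rw [fromRows_mul, Matrix.mul_assoc K₁, hDP, Matrix.add_mul, Matrix.mul_assoc K₂, hDP, hBpP]

theorem fromRows_mul_fromCols_eq [Fintype ι] [Fintype κ] [Fintype μ] [DecidableEq ι]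
    [DecidableEq κ] [DecidableEq μ] (hAp : IsMoorePenrose A Ap) (hB : B = (1 - A * Ap) * C)
    (hBp : IsMoorePenrose B Bp) (hL : L = Ap * C * (1 - Bp * B)) :
    fromRows ((1 + L * Lᵀ)⁻¹ * (Ap - Ap * C * Bp))
        (Lᵀ * (1 + L * Lᵀ)⁻¹ * (Ap - Ap * C * Bp) + Bp) * fromCols A C =
      fromBlocks ((1 + L * Lᵀ)⁻¹ * (Ap * A)) ((1 + L * Lᵀ)⁻¹ * L) (Lᵀ * (1 + L * Lᵀ)⁻¹)
        (Lᵀ * (1 + L * Lᵀ)⁻¹ * L + Bp * B) := by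
  have hApAL : Ap * A * L = L := pinv_mul_self_mul_of_eq hAp hL
  have hcomm := (commute_pinv_mul_self_one_add_mul_transpose hAp hApAL).nonsing_inv_right
  rw [fromRows_mul_fromCols, Matrix.mul_assoc _ _ A, Matrix.mul_assoc _ _ C, Matrix.add_mul,
    Matrix.add_mul, Matrix.mul_assoc _ _ A, Matrix.mul_assoc _ _ C, pinv_sub_mul_self hAp hB hBp,
    pinv_sub_mul_eq hAp hB hBp hL, residual_pinv_mul_self hAp hB hBp,
    residual_pinv_mul_eq hAp hB hBp, add_zero, Matrix.mul_assoc Lᵀ, ← hcomm.eq,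
    ← Matrix.mul_assoc, hAp.transpose_mul_pinv_mul_self hApAL]

theorem transpose_fromRows_mul_fromCols [Fintype ι] [Fintype κ] [Fintype μ] [DecidableEq ι]
    [DecidableEq κ] [DecidableEq μ] (hAp : IsMoorePenrose A Ap) (hB : B = (1 - A * Ap) * C)
    (hBp : IsMoorePenrose B Bp) (hL : L = Ap * C * (1 - Bp * B)) :
    (fromRows ((1 + L * Lᵀ)⁻¹ * (Ap - Ap * C * Bp))
        (Lᵀ * (1 + L * Lᵀ)⁻¹ * (Ap - Ap * C * Bp) + Bp) * fromCols A C)ᵀ =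
      fromRows ((1 + L * Lᵀ)⁻¹ * (Ap - Ap * C * Bp))
        (Lᵀ * (1 + L * Lᵀ)⁻¹ * (Ap - Ap * C * Bp) + Bp) * fromCols A C := by
  have hcomm := (commute_pinv_mul_self_one_add_mul_transpose hAp
    (pinv_mul_self_mul_of_eq hAp hL)).nonsing_inv_right
  rw [fromRows_mul_fromCols_eq hAp hB hBp hL, fromBlocks_transpose]
  simp only [transpose_mul, transpose_add, transpose_transpose,
    transpose_inv_one_add_mul_transpose, hAp.2.2.2, hBp.2.2.2, hcomm.eq, Matrix.mul_assoc]

end Partitioned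

theorem pinv_partitioned {m n p : ℕ} (A : Matrix (Fin m) (Fin n) ℝ)
    (C : Matrix (Fin m) (Fin p) ℝ)
    (Ap : Matrix (Fin n) (Fin m) ℝ) (hAp : IsMoorePenrose A Ap)
    (B : Matrix (Fin m) (Fin p) ℝ) (hB : B = (1 - A * Ap) * C)
    (Bp : Matrix (Fin p) (Fin m) ℝ) (hBp : IsMoorePenrose B Bp)
    (L : Matrix (Fin n) (Fin p) ℝ) (hL : L = Ap * C * (1 - Bp * B)) :
    IsMoorePenrose (fromCols A C)
      (fromRows
        ((1 + L * Lᵀ)⁻¹ * (Ap - Ap * C * Bp))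
        (Lᵀ * (1 + L * Lᵀ)⁻¹ * (Ap - Ap * C * Bp) + Bp)) := by
  have hMX := fromCols_mul_fromRows_eq hB hBp hL
  refine ⟨?_, ?_, ?_, transpose_fromRows_mul_fromCols hAp hB hBp hL⟩
  · rw [hMX, mul_pinv_add_mul_pinv_mul_fromCols hAp hB hBp]
  · rw [Matrix.mul_assoc, hMX, fromRows_mul_mul_pinv_add_mul_pinv hAp hB hBp]
  · rw [hMX, transpose_add, hAp.2.2.1, hBp.2.2.1]
end

section
/- Let V_b = {b + B u : u ∈ ℝ^{l₁}} and V_c = {c − C v : v ∈ ℝ^{l₂}} be linear varieties in ℝ^m, A = [B | C], d = c − b, and x* = A⁺ d with components x* = (u*, v*). Then b* = b + B u* ∈ V_b and c* = c − C v* ∈ V_c form a best approximation pair: ‖b* − c*‖ = inf{‖p − q‖ : p ∈ V_b, q ∈ V_c}. -/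
open Matrix

/-!
Stacking the parameters as `x = (u, v)`, the difference `(b + B u) - (c - C v)` is the residual
`A x - d` of the linear system `A x = d`. The Penrose equations `A A⁺ A = A` and `(A A⁺)ᵀ = A A⁺`
give the normal equations `Aᵀ (A A⁺ d - d) = 0`, so the residual `A A⁺ d - d` is orthogonal to the
range of `A`, and by Pythagoras `A⁺ d` is a least-squares solution.
-/

section LeastSquares

variable {ι κ : Type*} [Fintype ι] [Fintype κ]

lemma eucNorm_eq_sqrt_dotProduct (v : ι → ℝ) : eucNorm v = √(v ⬝ᵥ v) := by
  simp [eucNorm, EuclideanSpace.norm_eq, dotProduct, pow_two]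

lemma eucNorm_le_eucNorm_add_of_dotProduct_eq_zero {e w : ι → ℝ} (h : e ⬝ᵥ w = 0) :
    eucNorm e ≤ eucNorm (e + w) := by
  rw [eucNorm_eq_sqrt_dotProduct, eucNorm_eq_sqrt_dotProduct]
  apply Real.sqrt_le_sqrt
  have hw : 0 ≤ w ⬝ᵥ w := by simpa using dotProduct_self_star_nonneg w
  have hexpand : (e + w) ⬝ᵥ (e + w) = e ⬝ᵥ e + 2 * (e ⬝ᵥ w) + w ⬝ᵥ w := by
    simp only [add_dotProduct, dotProduct_add, dotProduct_comm w e]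
    ring
  linarith

lemma IsMoorePenrose.transpose_mul_mul_eq {A : Matrix ι κ ℝ} {Ap : Matrix κ ι ℝ}
    (hAp : IsMoorePenrose A Ap) : Aᵀ * (A * Ap) = Aᵀ :=
  calc Aᵀ * (A * Ap) = Aᵀ * (A * Ap)ᵀ := by rw [hAp.2.2.1]
    _ = (A * Ap * A)ᵀ := by rw [← transpose_mul]
    _ = Aᵀ := by rw [hAp.1]

lemma transpose_mulVec_residual_eq_zero {A : Matrix ι κ ℝ} {Ap : Matrix κ ι ℝ}
    (h : Aᵀ * (A * Ap) = Aᵀ) (d : ι → ℝ) : Aᵀ *ᵥ (A *ᵥ (Ap *ᵥ d) - d) = 0 := by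
  rw [mulVec_sub, mulVec_mulVec, mulVec_mulVec, Matrix.mul_assoc, h, sub_self]

lemma eucNorm_residual_le {A : Matrix ι κ ℝ} {Ap : Matrix κ ι ℝ}
    (h : Aᵀ * (A * Ap) = Aᵀ) (d : ι → ℝ) (x : κ → ℝ) :
    eucNorm (A *ᵥ (Ap *ᵥ d) - d) ≤ eucNorm (A *ᵥ x - d) := by
  have horth : (A *ᵥ (Ap *ᵥ d) - d) ⬝ᵥ A *ᵥ (x - Ap *ᵥ d) = 0 := by
    rw [dotProduct_mulVec, ← mulVec_transpose, transpose_mulVec_residual_eq_zero h,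
      zero_dotProduct]
  have hsplit : A *ᵥ x - d = (A *ᵥ (Ap *ᵥ d) - d) + A *ᵥ (x - Ap *ᵥ d) := by
    rw [mulVec_sub]
    abel
  rw [hsplit]
  exact eucNorm_le_eucNorm_add_of_dotProduct_eq_zero horth

end LeastSquares

theorem best_approximation_pair_via_pinv {m l₁ l₂ : ℕ} (b c : Fin m → ℝ)
    (B : Matrix (Fin m) (Fin l₁) ℝ) (C : Matrix (Fin m) (Fin l₂) ℝ)
    (Ap : Matrix (Fin l₁ ⊕ Fin l₂) (Fin m) ℝ)
    (hAp : IsMoorePenrose (fromCols B C) Ap)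
    (xstar : Fin l₁ ⊕ Fin l₂ → ℝ) (hx : xstar = Ap.mulVec (c - b))
    (ustar : Fin l₁ → ℝ) (hu : ustar = fun i => xstar (Sum.inl i))
    (vstar : Fin l₂ → ℝ) (hv : vstar = fun j => xstar (Sum.inr j)) :
    (b + B.mulVec ustar) ∈ {p | ∃ u, p = b + B.mulVec u} ∧
      (c - C.mulVec vstar) ∈ {q | ∃ v, q = c - C.mulVec v} ∧
      eucNorm ((b + B.mulVec ustar) - (c - C.mulVec vstar)) =
        sInf {r : ℝ | ∃ u v, r = eucNorm ((b + B.mulVec u) - (c - C.mulVec v))} := by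
  have hresidual : ∀ u v, (b + B *ᵥ u) - (c - C *ᵥ v) = fromCols B C *ᵥ (u ⊕ᵥ v) - (c - b) := by
    intro u v
    rw [fromCols_mulVec_sumElim]
    abel
  have hstar : ustar ⊕ᵥ vstar = Ap *ᵥ (c - b) := by
    funext i
    cases i <;> simp [hu, hv, hx]
  refine ⟨⟨ustar, rfl⟩, ⟨vstar, rfl⟩, Eq.symm (IsLeast.csInf_eq ?_)⟩
  refine ⟨⟨ustar, vstar, rfl⟩, ?_⟩
  rintro r ⟨u, v, rfl⟩
  rw [hresidual, hresidual, hstar]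
  exact eucNorm_residual_le hAp.transpose_mul_mul_eq (c - b) (u ⊕ᵥ v)
end

section
/- Consider in ℝ³ the lines L₁ = {(t, 0, 1) : t ∈ ℝ} and L₂ = {(0, s, 0) : s ∈ ℝ}. Writing L₁ = {b + B u} with b = (0,0,1), B = column (1,0,0), and L₂ = {c − C v} with c = (0,0,0), C = column (0,−1,0), and A = [B | C], d = c − b, the minimal-norm least squares solution x* = A⁺ d satisfies ‖x*‖ ≠ d(L₁, L₂); in fact ‖x*‖ = 0 while d(L₁, L₂) = 1. -/
/-! The right-hand side `d = c - b` is orthogonal to both direction vectors, so `Aᵀ d = 0`; since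
`A⁺ = A⁺ (A A⁺)ᵀ = A⁺ A⁺ᵀ Aᵀ`, the minimal-norm least squares solution `A⁺ d` vanishes. The points
`(t, 0, 1)` and `(0, s, 0)` of the two lines are at distance `√(t² + s² + 1) ≥ 1`, with equality at `t = s = 0`. -/

open Matrix

theorem eucNorm_eq_sqrt_sum_sq {ι : Type*} [Fintype ι] (v : ι → ℝ) :
    eucNorm v = √(∑ i, v i ^ 2) := by
  simp only [eucNorm, EuclideanSpace.norm_eq, Real.norm_eq_abs, sq_abs]
  rfl

theorem eucNorm_zero {ι : Type*} [Fintype ι] : eucNorm (0 : ι → ℝ) = 0 := by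
  simp [eucNorm_eq_sqrt_sum_sq]

namespace IsMoorePenrose

variable {ι κ : Type*} [Fintype ι] [Fintype κ] {A : Matrix ι κ ℝ} {Ap : Matrix κ ι ℝ}

theorem eq_mul_transpose_mul_transpose (h : IsMoorePenrose A Ap) : Ap = Ap * Apᵀ * Aᵀ := by
  obtain ⟨-, h₂, h₃, -⟩ := h
  calc Ap = Ap * (A * Ap) := by rw [← Matrix.mul_assoc, h₂]
    _ = Ap * (A * Ap)ᵀ := by rw [h₃]
    _ = Ap * Apᵀ * Aᵀ := by rw [transpose_mul, Matrix.mul_assoc]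

theorem mulVec_eq_zero_of_transpose_mulVec_eq_zero (h : IsMoorePenrose A Ap) {d : ι → ℝ}
    (hd : Aᵀ *ᵥ d = 0) : Ap *ᵥ d = 0 := by
  rw [h.eq_mul_transpose_mul_transpose, ← mulVec_mulVec, hd, mulVec_zero]

end IsMoorePenrose

theorem eucNorm_skew_lines_sub (t s : ℝ) :
    eucNorm (![t, 0, 1] - ![0, s, 0]) = √(t ^ 2 + s ^ 2 + 1) := by
  simp [eucNorm_eq_sqrt_sum_sq, Fin.sum_univ_three]

theorem isLeast_eucNorm_skew_lines_sub :
    IsLeast {r : ℝ | ∃ t s : ℝ, r = eucNorm (![t, 0, 1] - ![0, s, 0])} 1 := by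
  refine ⟨⟨0, 0, by rw [eucNorm_skew_lines_sub]; norm_num⟩, ?_⟩
  rintro r ⟨t, s, rfl⟩
  rw [eucNorm_skew_lines_sub, Real.one_le_sqrt]
  nlinarith [sq_nonneg t, sq_nonneg s]

theorem counterexample_norm_xstar_ne_distance
    (B : Matrix (Fin 3) (Fin 1) ℝ) (hB : B = !![(1:ℝ); 0; 0])
    (C : Matrix (Fin 3) (Fin 1) ℝ) (hC : C = !![(0:ℝ); -1; 0])
    (b : Fin 3 → ℝ) (hb : b = ![0, 0, 1])
    (c : Fin 3 → ℝ) (hc : c = ![0, 0, 0])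
    (Ap : Matrix (Fin 1 ⊕ Fin 1) (Fin 3) ℝ)
    (hAp : IsMoorePenrose (fromCols B C) Ap)
    (xstar : Fin 1 ⊕ Fin 1 → ℝ) (hx : xstar = Ap.mulVec (c - b)) :
    eucNorm xstar = 0 ∧
      sInf {r : ℝ | ∃ t s : ℝ, r = eucNorm (![t, 0, 1] - ![0, s, 0])} = 1 ∧
      eucNorm xstar ≠
        sInf {r : ℝ | ∃ t s : ℝ, r = eucNorm (![t, 0, 1] - ![0, s, 0])} := by
  have hAd : (fromCols B C)ᵀ *ᵥ (c - b) = 0 := by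
    subst hB hC hb hc
    ext (j | j) <;> simp [mulVec, dotProduct, Fin.sum_univ_three]
  have hnorm : eucNorm xstar = 0 := by
    rw [hx, hAp.mulVec_eq_zero_of_transpose_mulVec_eq_zero hAd, eucNorm_zero]
  have hdist := isLeast_eucNorm_skew_lines_sub.csInf_eq
  exact ⟨hnorm, hdist, by rw [hnorm, hdist]; exact zero_ne_one⟩
end

section
/- For the partitioned matrix [A | C] with B = (I − A A⁺) C, the column space of [A | C] is the orthogonal direct sum of the column space of A and the column space of B. -/
open Matrix

/-! Since `C = B + A (A⁺ C)`, adjoining the columns of `C` or those of `B` to those of `A` spans the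
same space; and `Aᵀ B = Aᵀ (1 - A A⁺) C = 0` because `A A⁺` is symmetric and fixes the columns
of `A`. -/

namespace Matrix

variable {R : Type*} {m n₁ n₂ k : Type*} [Fintype n₁] [Fintype n₂] [Fintype k]

theorem range_mulVecLin_fromCols [CommSemiring R] (A : Matrix m n₁ R) (C : Matrix m n₂ R) :
    LinearMap.range (fromCols A C).mulVecLin =
      LinearMap.range A.mulVecLin ⊔ LinearMap.range C.mulVecLin := by
  have hcomp : (fromCols A C).mulVecLin =
      (A.mulVecLin.coprod C.mulVecLin).comp
        (LinearEquiv.sumArrowLequivProdArrow n₁ n₂ R R).toLinearMap := by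
    ext w : 1
    exact fromCols_mulVec A C w
  rw [hcomp, LinearMap.range_comp_of_range_eq_top _ (LinearEquiv.range _),
    LinearMap.range_coprod]

theorem range_mulVecLin_add_mul_le [CommSemiring R] (A : Matrix m n₁ R) (B : Matrix m n₂ R)
    (D : Matrix n₁ n₂ R) :
    LinearMap.range (B + A * D).mulVecLin ≤
      LinearMap.range A.mulVecLin ⊔ LinearMap.range B.mulVecLin := by
  rw [mulVecLin_add, sup_comm, mulVecLin_mul]
  exact (LinearMap.range_add_le _ _).trans (sup_le_sup_left (LinearMap.range_comp_le_range _ _) _)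

theorem sup_range_mulVecLin_add_mul [CommRing R] (A : Matrix m n₁ R) (B : Matrix m n₂ R)
    (D : Matrix n₁ n₂ R) :
    LinearMap.range A.mulVecLin ⊔ LinearMap.range (B + A * D).mulVecLin =
      LinearMap.range A.mulVecLin ⊔ LinearMap.range B.mulVecLin := by
  refine le_antisymm (sup_le le_sup_left (range_mulVecLin_add_mul_le A B D)) ?_
  have hB : B = (B + A * D) + A * -D := by rw [Matrix.mul_neg, add_neg_cancel_right]
  conv_lhs => rw [hB]
  exact sup_le le_sup_left (range_mulVecLin_add_mul_le A _ (-D))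

theorem dotProduct_eq_zero_of_transpose_mul_eq_zero [CommSemiring R] [Fintype m]
    {A : Matrix m n₁ R} {B : Matrix m n₂ R} (h : Aᵀ * B = 0) :
    ∀ x ∈ LinearMap.range A.mulVecLin, ∀ y ∈ LinearMap.range B.mulVecLin, x ⬝ᵥ y = 0 := by
  rintro _ ⟨u, rfl⟩ _ ⟨v, rfl⟩
  rw [mulVecLin_apply, mulVecLin_apply, ← vecMul_transpose, ← dotProduct_mulVec,
    mulVec_mulVec, h, zero_mulVec, dotProduct_zero]

theorem transpose_mul_one_sub_mul_eq_zero [CommRing R] [Fintype m] [DecidableEq m]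
    {A : Matrix m k R} {Ap : Matrix k m R} (h₁ : A * Ap * A = A) (h₃ : (A * Ap)ᵀ = A * Ap) :
    Aᵀ * (1 - A * Ap) = 0 := by
  rw [Matrix.mul_sub, Matrix.mul_one, ← h₃, ← transpose_mul, h₁, sub_self]

end Matrix

theorem column_space_orthogonal_decomposition {m n p : ℕ} (A : Matrix (Fin m) (Fin n) ℝ)
    (C : Matrix (Fin m) (Fin p) ℝ)
    (Ap : Matrix (Fin n) (Fin m) ℝ) (hAp : IsMoorePenrose A Ap)
    (B : Matrix (Fin m) (Fin p) ℝ) (hB : B = (1 - A * Ap) * C) :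
    LinearMap.range (fromCols A C).mulVecLin =
        LinearMap.range A.mulVecLin ⊔ LinearMap.range B.mulVecLin ∧
      ∀ x ∈ LinearMap.range A.mulVecLin, ∀ y ∈ LinearMap.range B.mulVecLin,
        dotProduct x y = 0 := by
  obtain ⟨h₁, -, h₃, -⟩ := hAp
  have hC : C = B + A * (Ap * C) := by
    rw [hB, Matrix.sub_mul, Matrix.one_mul, Matrix.mul_assoc, sub_add_cancel]
  refine ⟨?_, dotProduct_eq_zero_of_transpose_mul_eq_zero ?_⟩
  · rw [range_mulVecLin_fromCols, hC, sup_range_mulVecLin_add_mul]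
  · rw [hB, ← Matrix.mul_assoc, transpose_mul_one_sub_mul_eq_zero h₁ h₃, Matrix.zero_mul]
end
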